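/- Let {ψ_n}_{n=0}^∞ be the orthonormal basis of L²(0,1) obtained by Gram–Schmidt applied to {sⁿe^s}_{n=0}^∞, and set a_{mn} = ⟨ψ_n', ψ_m⟩. For every integer k ≥ 1, the k×k matrix M_k = (a_{mn})_{m,n=0}^{k-1} is upper triangular with all diagonal entries equal to 1; in particular det(M_k) = 1 and M_k is invertible. -/

import Mathlib

open MeasureTheory Real intervalIntegral Polynomial

/-!
Write `ψ n = Pₙ eˢ` with `deg Pₙ = n`. Then `ψ n' = (Pₙ + Pₙ') eˢ = ψ n + Pₙ' eˢ`, and since the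
`Pⱼ` with `j < m` span the polynomials of degree `< m`, orthogonality of `ψ m` to `ψ j` for `j < m`
makes `Q eˢ ⟂ ψ m` whenever `deg Q < m`. For `n ≤ m` this kills the `Pₙ' eˢ` term, so
`⟨ψ n', ψ m⟩ = ⟨ψ n, ψ m⟩ = δₙₘ`.
-/

lemma degree_sum_fin_succ_C_mul_X_pow {R : Type*} [Semiring R] {n : ℕ}
    (c : Fin (n + 1) → R) (hc : c (Fin.last n) ≠ 0) :
    (∑ k : Fin (n + 1), C (c k) * X ^ (k : ℕ)).degree = (n : WithBot ℕ) := by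
  rw [Fin.sum_univ_castSucc, degree_add_eq_right_of_degree_lt] <;>
    rw [Fin.val_last, degree_C_mul_X_pow n hc]
  simpa only [Fin.val_castSucc] using degree_sum_fin_lt (fun i : Fin n => c i.castSucc)

lemma Polynomial.Sequence.intervalIntegral_eval_mul_eq_zero {a b : ℝ} {w : ℝ → ℝ}
    (hw : IntervalIntegrable w volume a b) (S : Sequence ℝ) {m : ℕ}
    (hS : ∀ j < m, ∫ x in a..b, (S j).eval x * w x = 0) {Q : ℝ[X]} (hQ : Q ∈ degreeLT ℝ m) :
    ∫ x in a..b, Q.eval x * w x = 0 := by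
  have hint (P : ℝ[X]) : IntervalIntegrable (fun x => P.eval x * w x) volume a b :=
    hw.continuousOn_mul P.continuous.continuousOn
  rw [← S.span_degreeLT fun i _ => (leadingCoeff_ne_zero.mpr (S.ne_zero i)).isUnit] at hQ
  induction hQ using Submodule.span_induction with
  | mem P hP =>
    obtain ⟨j, hj, rfl⟩ := hP
    exact hS j hj
  | zero => simp
  | add P R _ _ hP hR =>
    simp only [eval_add, add_mul, integral_add (hint P) (hint R), hP, hR, add_zero]
  | smul r P _ hP =>
    simp only [eval_smul, smul_eq_mul, mul_assoc, intervalIntegral.integral_const_mul, hP,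
      mul_zero]

lemma hasDerivAt_eval_mul_exp (P : ℝ[X]) (x : ℝ) :
    HasDerivAt (fun s => P.eval s * exp s) ((P + derivative P).eval x * exp x) x :=
  ((P.hasDerivAt x).mul (hasDerivAt_exp x)).congr_deriv (by rw [eval_add]; ring)

lemma exists_sequence_eq_eval_mul_exp {ψ : ℕ → ℝ → ℝ}
    (hform : ∀ n : ℕ, ∃ c : Fin (n + 1) → ℝ, c (Fin.last n) ≠ 0 ∧
      ∀ s : ℝ, ψ n s = ∑ k : Fin (n + 1), c k * s ^ (k : ℕ) * exp s) :
    ∃ P : Sequence ℝ, ∀ n, ψ n = fun s => (P n).eval s * exp s := by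
  choose c hc hψ using hform
  refine ⟨⟨fun n => ∑ k : Fin (n + 1), C (c n k) * X ^ (k : ℕ),
    fun n => degree_sum_fin_succ_C_mul_X_pow (c n) (hc n)⟩, fun n => funext fun s => ?_⟩
  simp [hψ, eval_finsetSum, Finset.sum_mul]

lemma intervalIntegral_deriv_mul_eq_of_le {a b : ℝ} {ψ : ℕ → ℝ → ℝ} (P : Sequence ℝ)
    (hψ : ∀ n, ψ n = fun s => (P n).eval s * exp s)
    (horth : ∀ m n : ℕ, (∫ s in a..b, ψ m s * ψ n s) = if m = n then 1 else 0)
    {n m : ℕ} (hnm : n ≤ m) :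
    ∫ s in a..b, deriv (ψ n) s * ψ m s = if n = m then 1 else 0 := by
  have hcont (j : ℕ) : Continuous (ψ j) := by
    rw [hψ j]; exact (P j).continuous.mul continuous_exp
  have hw : IntervalIntegrable (fun s => exp s * ψ m s) volume a b :=
    (continuous_exp.mul (hcont m)).intervalIntegrable a b
  have hderiv (s : ℝ) : deriv (ψ n) s * ψ m s
      = ψ n s * ψ m s + (derivative (P n)).eval s * (exp s * ψ m s) := by
    rw [hψ n, (hasDerivAt_eval_mul_exp _ s).deriv, eval_add]; ring
  have hS : ∀ j < m, ∫ s in a..b, (P j).eval s * (exp s * ψ m s) = 0 := fun j hj => by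
    simpa only [hψ j, mul_assoc, if_neg hj.ne] using horth j m
  have hdeg : derivative (P n) ∈ degreeLT ℝ m := by
    rw [mem_degreeLT]
    calc (derivative (P n)).degree < (P n).degree := degree_derivative_lt (P.ne_zero n)
      _ ≤ m := by rw [P.degree_eq]; exact_mod_cast hnm
  rw [integral_congr fun s _ => hderiv s,
    integral_add (((hcont n).fun_mul (hcont m)).intervalIntegrable a b)
      (hw.continuousOn_mul (derivative (P n)).continuous.continuousOn), horth,
    P.intervalIntegral_eval_mul_eq_zero hw hS hdeg, add_zero]

theorem gramSchmidt_deriv_matrix_unit_upper_triangular_general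
    (ψ : ℕ → ℝ → ℝ)
    (horth : ∀ m n : ℕ, (∫ s in (0:ℝ)..1, ψ m s * ψ n s) = if m = n then 1 else 0)
    (hform : ∀ n : ℕ, ∃ c : Fin (n + 1) → ℝ,
      c ⟨n, Nat.lt_succ_self n⟩ ≠ 0 ∧
      ∀ s : ℝ, ψ n s = ∑ k : Fin (n + 1), c k * s ^ (k : ℕ) * Real.exp s)
    (k : ℕ)
    (M : Matrix (Fin k) (Fin k) ℝ)
    (hM : ∀ m n : Fin k, M m n = ∫ s in (0:ℝ)..1, deriv (ψ n) s * ψ m s) :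
    (∀ m n : Fin k, (n : ℕ) < (m : ℕ) → M m n = 0) ∧
    (∀ n : Fin k, M n n = 1) ∧
    M.det = 1 ∧ IsUnit M := by
  obtain ⟨P, hψ⟩ := exists_sequence_eq_eval_mul_exp hform
  have hlow : ∀ m n : Fin k, (n : ℕ) < (m : ℕ) → M m n = 0 := fun m n h => by
    rw [hM, intervalIntegral_deriv_mul_eq_of_le P hψ horth h.le, if_neg h.ne]
  have hdiag : ∀ n : Fin k, M n n = 1 := fun n => by
    rw [hM, intervalIntegral_deriv_mul_eq_of_le P hψ horth le_rfl, if_pos rfl]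
  have hdet : M.det = 1 := by
    rw [Matrix.det_of_isUpperTriangular hlow]
    simp [hdiag]
  exact ⟨hlow, hdiag, hdet, M.isUnit_iff_isUnit_det.mpr (hdet ▸ isUnit_one)⟩

/-- For the orthonormal basis `ψ n` of `L²(0,1)` obtained by
Gram–Schmidt from `s ↦ sⁿ eˢ` (each `ψ n = Pₙ(s) eˢ` with `Pₙ` of degree exactly `n`),
setting `a m n = ⟨ψₙ', ψₘ⟩`, for every `k ≥ 1` the `k × k` matrix
`M_k = (a m n)_{m,n=0}^{k-1}` is upper triangular with unit diagonal; in particular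
`det M_k = 1` and `M_k` is invertible. -/
theorem gramSchmidt_deriv_matrix_unit_upper_triangular
    (ψ : ℕ → ℝ → ℝ)
    (hψC1 : ∀ n, ContDiff ℝ 1 (ψ n))
    (horth : ∀ m n : ℕ, (∫ s in (0:ℝ)..1, ψ m s * ψ n s) = if m = n then 1 else 0)
    (hform : ∀ n : ℕ, ∃ c : Fin (n + 1) → ℝ,
      c ⟨n, Nat.lt_succ_self n⟩ ≠ 0 ∧
      ∀ s : ℝ, ψ n s = ∑ k : Fin (n + 1), c k * s ^ (k : ℕ) * Real.exp s)
    (k : ℕ) (hk : 1 ≤ k)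
    (M : Matrix (Fin k) (Fin k) ℝ)
    (hM : ∀ m n : Fin k, M m n = ∫ s in (0:ℝ)..1, deriv (ψ n) s * ψ m s) :
    (∀ m n : Fin k, (n : ℕ) < (m : ℕ) → M m n = 0) ∧
    (∀ n : Fin k, M n n = 1) ∧
    M.det = 1 ∧ IsUnit M :=
  gramSchmidt_deriv_matrix_unit_upper_triangular_general ψ horth hform k M hM
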